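/- Let d ≥ 1 and r > 0. Let μ and ν be compactly supported probability measures on ℝ^d, let g_r be the N(0, rI_d) density, and let p = μ ⋆ g_r and q = ν ⋆ g_r be the densities of the Gaussian-smoothed measures (i.e., p(x) = ∫ g_r(x − u) dμ(u) and similarly for q). Assume the differential entropies h(p) = −∫ p log p, h(q) = −∫ q log q, and h(p ∗ q) = −∫ (p∗q) log(p∗q) are defined and finite. Then h(p ∗ q) ≤ h(p) + h(q) − (d/2) · log(πr). Equivalently, if X_r = X + √r Z₁ and Y_r = Y + √r Z₂ are independent r-smoothed random variables (X ∼ μ, Y ∼ ν, Z₁, Z₂ standard Gaussian, all independent), then h(X_r + Y_r) ≤ h(X_r) + h(Y_r) − (d/2) log(πr). -/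

import Mathlib

/-!
Completing the square, `g_r(a) g_r(b) = g_{2r}(a + b) g_{r/2}((a - b)/2)`, and the bound
`g_{r/2} ≤ (πr)^{-d/2}` give `(πr)^{d/2} g_r(a) g_r(b) ≤ g_{2r}(a + b)`. As `p ∗ q` is the
smoothing of `μ ∗ ν` by `g_{2r}`, integrating over `μ ⊗ ν` yields the pointwise bound
`(πr)^{d/2} p(x) q(y) ≤ (p ∗ q)(x + y)`. Hence
`∫ (p ∗ q) log (p ∗ q) = ∬ p(x) q(y) log (p ∗ q)(x + y)` is at least
`∬ p(x) q(y) log ((πr)^{d/2} p(x) q(y)) = (d/2) log (πr) - h(p) - h(q)`.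
-/

open MeasureTheory Set Filter
open scoped ENNReal

/-- The density of the centered Gaussian distribution `N(0, sI_d)` on `ℝ^d`:
`g_s(x) = (2πs)^{−d/2} e^{−‖x‖²/(2s)}`. -/
noncomputable def gaussDens (d : ℕ) (s : ℝ) (x : EuclideanSpace ℝ (Fin d)) : ℝ :=
  (2 * Real.pi * s) ^ (-(d : ℝ) / 2) * Real.exp (-‖x‖ ^ 2 / (2 * s))

section ConvolutionEntropy

variable {G : Type*} [AddCommGroup G] [MeasurableSpace G] {m : Measure G} [SFinite m]
  {p q pq : G → ℝ}

lemma integral_conv_integrand_mul_log (hpq : ∀ t, pq t = ∫ τ, p τ * q (t - τ) ∂m)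
    (hF : Integrable (fun z : G × G => p z.2 * q (z.1 - z.2) * Real.log (pq z.1)) (m.prod m)) :
    ∫ z, p z.2 * q (z.1 - z.2) * Real.log (pq z.1) ∂(m.prod m) =
      ∫ t, pq t * Real.log (pq t) ∂m := by
  simp only [integral_prod _ hF, integral_mul_const, ← hpq]

variable [MeasurableAdd₂ G] [MeasurableNeg G] [m.IsAddRightInvariant]

lemma integrable_conv_integrand_mul_log (hp_nonneg : ∀ x, 0 ≤ p x) (hq_nonneg : ∀ y, 0 ≤ q y)
    (hp : Integrable p m) (hq : Integrable q m) (hpq : ∀ t, pq t = ∫ τ, p τ * q (t - τ) ∂m)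
    (hpqInt : Integrable (fun t => pq t * Real.log (pq t)) m) :
    Integrable (fun z : G × G => p z.2 * q (z.1 - z.2) * Real.log (pq z.1)) (m.prod m) := by
  have hconv : Integrable (fun z : G × G => p z.2 * q (z.1 - z.2)) (m.prod m) :=
    hp.convolution_integrand (ContinuousLinearMap.mul ℝ ℝ) hq
  have hpq_eq : pq = convolution p q (ContinuousLinearMap.mul ℝ ℝ) m :=
    funext fun t => by simp [convolution_def, hpq]
  have hpq_meas : AEMeasurable pq m := (hpq_eq ▸ hp.integrable_convolution _ hq).aemeasurable
  refine (integrable_prod_iff ?_).2 ⟨?_, ?_⟩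
  · exact hconv.aestronglyMeasurable.mul hpq_meas.log.comp_fst.aestronglyMeasurable
  · filter_upwards [hconv.prod_right_ae] with t ht using ht.mul_const _
  · refine hpqInt.norm.congr (Eventually.of_forall fun t => ?_)
    have hpq0 : 0 ≤ pq t := hpq t ▸ integral_nonneg fun τ => mul_nonneg (hp_nonneg τ) (hq_nonneg _)
    simp only [norm_mul, Real.norm_of_nonneg (hp_nonneg _), Real.norm_of_nonneg (hq_nonneg _),
      Real.norm_of_nonneg hpq0, integral_mul_const, ← hpq]

lemma mul_add_log_le_mul_log {a b c t : ℝ} (ha : 0 < a) (hb : 0 < b) (hc : 0 < c)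
    (h : c * (a * b) ≤ t) :
    a * b * (Real.log c + Real.log a + Real.log b) ≤ a * b * Real.log t := by
  gcongr
  rw [add_assoc, ← Real.log_mul ha.ne' hb.ne', ← Real.log_mul hc.ne' (by positivity)]
  exact Real.log_le_log (by positivity) h

theorem log_add_integral_mul_log_le_integral_conv_mul_log {c : ℝ} (hc : 0 < c)
    (hp_pos : ∀ x, 0 < p x) (hq_pos : ∀ y, 0 < q y) (hp : Integrable p m) (hq : Integrable q m)
    (hp1 : ∫ x, p x ∂m = 1) (hq1 : ∫ y, q y ∂m = 1)
    (hpq : ∀ t, pq t = ∫ τ, p τ * q (t - τ) ∂m)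
    (hbound : ∀ x y, c * (p x * q y) ≤ pq (x + y))
    (hpInt : Integrable (fun x => p x * Real.log (p x)) m)
    (hqInt : Integrable (fun y => q y * Real.log (q y)) m)
    (hpqInt : Integrable (fun t => pq t * Real.log (pq t)) m) :
    Real.log c + ∫ x, p x * Real.log (p x) ∂m + ∫ y, q y * Real.log (q y) ∂m ≤
      ∫ t, pq t * Real.log (pq t) ∂m := by
  set Φ := fun z : G × G => q z.1 * p z.2 * Real.log (pq (z.1 + z.2))
  have hF := integrable_conv_integrand_mul_log (fun x => (hp_pos x).le) (fun y => (hq_pos y).le)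
    hp hq hpq hpqInt
  -- `(y, x) ↦ (y + x, x)` turns the convolution integrand into `Φ`
  have he := measurePreserving_add_prod m m
  have hΦ : Integrable Φ (m.prod m) := by
    simpa [Φ, Function.comp_def, mul_comm (q _)] using he.integrable_comp_of_integrable hF
  have hΦ_eq : ∫ z, Φ z ∂(m.prod m) = ∫ t, pq t * Real.log (pq t) ∂m := by
    have h := integral_map he.measurable.aemeasurable (he.map_eq ▸ hF.aestronglyMeasurable)
    rw [he.map_eq, integral_conv_integrand_mul_log hpq hF] at h
    simpa [Φ, mul_comm (q _)] using h.symm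
  calc Real.log c + ∫ x, p x * Real.log (p x) ∂m + ∫ y, q y * Real.log (q y) ∂m
      = ∫ y, q y * (Real.log c + ∫ x, p x * Real.log (p x) ∂m) + q y * Real.log (q y) ∂m := by
        rw [integral_add (hq.mul_const _) hqInt, integral_mul_const, hq1, one_mul]
    _ ≤ ∫ y, ∫ x, Φ (y, x) ∂m ∂m := by
        refine integral_mono_ae ((hq.mul_const _).add hqInt) hΦ.integral_prod_left ?_
        filter_upwards [hΦ.prod_right_ae] with y hy
        calc q y * (Real.log c + ∫ x, p x * Real.log (p x) ∂m) + q y * Real.log (q y)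
            = ∫ x, q y * p x * (Real.log c + Real.log (q y)) +
                q y * (p x * Real.log (p x)) ∂m := by
              rw [integral_add ((hp.const_mul _).mul_const _) (hpInt.const_mul _),
                integral_mul_const, integral_const_mul, integral_const_mul, hp1]
              ring
          _ ≤ ∫ x, Φ (y, x) ∂m :=
            integral_mono (((hp.const_mul _).mul_const _).add (hpInt.const_mul _)) hy fun x => by
              have := mul_add_log_le_mul_log (hq_pos y) (hp_pos x) hc
                (by simpa [mul_comm, add_comm] using hbound x y)
              simp only [Φ]
              linear_combination this
    _ = ∫ t, pq t * Real.log (pq t) ∂m := by rw [← integral_prod _ hΦ, hΦ_eq]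

end ConvolutionEntropy

section Gaussian

variable {d : ℕ} {s r : ℝ}

lemma gaussDens_pos (hs : 0 < s) (x : EuclideanSpace ℝ (Fin d)) : 0 < gaussDens d s x := by
  unfold gaussDens; positivity

@[fun_prop]
lemma continuous_gaussDens : Continuous (gaussDens d s) := by
  unfold gaussDens; fun_prop

lemma gaussDens_le (hs : 0 < s) (x : EuclideanSpace ℝ (Fin d)) :
    gaussDens d s x ≤ (2 * Real.pi * s) ^ (-(d : ℝ) / 2) := by
  refine mul_le_of_le_one_right (by positivity) (Real.exp_le_one_iff.2 ?_)
  exact div_nonpos_of_nonpos_of_nonneg (neg_nonpos.2 (by positivity)) (by positivity)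

lemma integral_gaussDens (hs : 0 < s) : ∫ x, gaussDens d s x = 1 := by
  have hb : (0 : ℝ) < 1 / (2 * s) := by positivity
  have h := GaussianFourier.integral_rexp_neg_mul_sq_norm (V := EuclideanSpace ℝ (Fin d)) hb
  rw [finrank_euclideanSpace_fin, show Real.pi / (1 / (2 * s)) = 2 * Real.pi * s by field_simp]
    at h
  have hexp (x : EuclideanSpace ℝ (Fin d)) :
      -(‖x‖ ^ 2 / (2 * s)) = -(1 / (2 * s)) * ‖x‖ ^ 2 := by
    ring
  simp only [gaussDens, integral_const_mul, neg_div, hexp, h]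
  rw [Real.rpow_neg (by positivity), inv_mul_cancel₀ (by positivity)]

lemma lintegral_gaussDens (hs : 0 < s) :
    ∫⁻ x, ENNReal.ofReal (gaussDens d s x) = 1 := by
  have h := integral_gaussDens (d := d) hs
  rw [← ofReal_integral_eq_lintegral_ofReal (Integrable.of_integral_ne_zero (by simp [h]))
    (ae_of_all _ fun x => (gaussDens_pos hs x).le), h, ENNReal.ofReal_one]

lemma gaussDens_mul_gaussDens (hr : 0 < r) (a b : EuclideanSpace ℝ (Fin d)) :
    gaussDens d r a * gaussDens d r b =
      gaussDens d (2 * r) (a + b) * gaussDens d (r / 2) ((2 : ℝ)⁻¹ • (a - b)) := by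
  have hpar : ‖a + b‖ ^ 2 + ‖a - b‖ ^ 2 = 2 * (‖a‖ ^ 2 + ‖b‖ ^ 2) := by
    simpa [pow_two] using parallelogram_law_with_norm ℝ a b
  have hconst : (2 * Real.pi * r) ^ (-(d : ℝ) / 2) * (2 * Real.pi * r) ^ (-(d : ℝ) / 2) =
      (2 * Real.pi * (2 * r)) ^ (-(d : ℝ) / 2) * (2 * Real.pi * (r / 2)) ^ (-(d : ℝ) / 2) := by
    rw [← Real.mul_rpow (by positivity) (by positivity),
      ← Real.mul_rpow (by positivity) (by positivity)]
    ring_nf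
  have hexp : -‖a‖ ^ 2 / (2 * r) + -‖b‖ ^ 2 / (2 * r) =
      -‖a + b‖ ^ 2 / (2 * (2 * r)) + -‖(2 : ℝ)⁻¹ • (a - b)‖ ^ 2 / (2 * (r / 2)) := by
    rw [norm_smul, Real.norm_of_nonneg (by norm_num)]
    field_simp
    linear_combination hpar
  simp only [gaussDens]
  rw [mul_mul_mul_comm, hconst, ← Real.exp_add, hexp, Real.exp_add]
  ring

lemma rpow_mul_gaussDens_mul_le (hr : 0 < r) (a b : EuclideanSpace ℝ (Fin d)) :
    (Real.pi * r) ^ ((d : ℝ) / 2) * (gaussDens d r a * gaussDens d r b) ≤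
      gaussDens d (2 * r) (a + b) := by
  have h := gaussDens_le (d := d) (half_pos hr) ((2 : ℝ)⁻¹ • (a - b))
  rw [show 2 * Real.pi * (r / 2) = Real.pi * r by ring, neg_div, Real.rpow_neg (by positivity)]
    at h
  have hc : 0 < (Real.pi * r) ^ ((d : ℝ) / 2) := by positivity
  have hsmall : (Real.pi * r) ^ ((d : ℝ) / 2) * gaussDens d (r / 2) ((2 : ℝ)⁻¹ • (a - b)) ≤ 1 :=
    calc _ ≤ (Real.pi * r) ^ ((d : ℝ) / 2) * ((Real.pi * r) ^ ((d : ℝ) / 2))⁻¹ := by gcongr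
      _ = 1 := mul_inv_cancel₀ hc.ne'
  rw [gaussDens_mul_gaussDens hr, mul_left_comm]
  exact mul_le_of_le_one_right (gaussDens_pos (by positivity) _).le hsmall

lemma lintegral_gaussDens_mul_gaussDens (hr : 0 < r) (t : EuclideanSpace ℝ (Fin d)) :
    ∫⁻ τ, ENNReal.ofReal (gaussDens d r τ) * ENNReal.ofReal (gaussDens d r (t - τ)) =
      ENNReal.ofReal (gaussDens d (2 * r) t) := by
  have h (τ : EuclideanSpace ℝ (Fin d)) :
      ENNReal.ofReal (gaussDens d r τ) * ENNReal.ofReal (gaussDens d r (t - τ)) =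
        ENNReal.ofReal (gaussDens d (2 * r) t) *
          ENNReal.ofReal (gaussDens d (r / 2) (τ - (2 : ℝ)⁻¹ • t)) := by
    rw [← ENNReal.ofReal_mul (gaussDens_pos hr _).le, gaussDens_mul_gaussDens hr,
      ENNReal.ofReal_mul (gaussDens_pos (by positivity) _).le]
    congr 3
    · abel
    · module
  simp_rw [h]
  rw [lintegral_const_mul _ (by fun_prop),
    lintegral_sub_right_eq_self (fun τ => ENNReal.ofReal (gaussDens d (r / 2) τ)),
    lintegral_gaussDens (half_pos hr), mul_one]

end Gaussian

noncomputable def gaussSmooth (d : ℕ) (r : ℝ) (μ : Measure (EuclideanSpace ℝ (Fin d)))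
    (x : EuclideanSpace ℝ (Fin d)) : ℝ :=
  ∫ u, gaussDens d r (x - u) ∂μ

section GaussSmooth

variable {d : ℕ} {r : ℝ} (μ ν : Measure (EuclideanSpace ℝ (Fin d)))
  [IsProbabilityMeasure μ] [IsProbabilityMeasure ν]

lemma integrable_gaussDens_sub (hr : 0 < r) (x : EuclideanSpace ℝ (Fin d)) :
    Integrable (fun u => gaussDens d r (x - u)) μ :=
  .of_bound (by fun_prop) _ <| ae_of_all _ fun u => by
    rw [Real.norm_of_nonneg (gaussDens_pos hr _).le]
    exact gaussDens_le hr _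

lemma gaussSmooth_pos (hr : 0 < r) (x : EuclideanSpace ℝ (Fin d)) :
    0 < gaussSmooth d r μ x := by
  have hsupp : Function.support (fun u => gaussDens d r (x - u)) = univ :=
    Function.support_eq_univ fun u => (gaussDens_pos hr _).ne'
  rw [gaussSmooth, integral_pos_iff_support_of_nonneg (fun u => (gaussDens_pos hr _).le)
    (integrable_gaussDens_sub μ hr x), hsupp]
  simp

lemma gaussSmooth_le (hr : 0 < r) (x : EuclideanSpace ℝ (Fin d)) :
    gaussSmooth d r μ x ≤ (2 * Real.pi * r) ^ (-(d : ℝ) / 2) := by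
  simpa [gaussSmooth] using integral_mono (integrable_gaussDens_sub μ hr x) (integrable_const _)
    fun u => gaussDens_le hr (x - u)

lemma stronglyMeasurable_gaussSmooth : StronglyMeasurable (gaussSmooth d r μ) :=
  (continuous_gaussDens.comp (continuous_fst.sub continuous_snd)).stronglyMeasurable
    |>.integral_prod_right' (f := fun z : _ × _ => gaussDens d r (z.1 - z.2))

lemma ofReal_gaussSmooth (hr : 0 < r) (x : EuclideanSpace ℝ (Fin d)) :
    ENNReal.ofReal (gaussSmooth d r μ x) = ∫⁻ u, ENNReal.ofReal (gaussDens d r (x - u)) ∂μ :=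
  ofReal_integral_eq_lintegral_ofReal (integrable_gaussDens_sub μ hr x)
    (ae_of_all _ fun _ => (gaussDens_pos hr _).le)

lemma lintegral_gaussSmooth (hr : 0 < r) :
    ∫⁻ x, ENNReal.ofReal (gaussSmooth d r μ x) = 1 := by
  simp_rw [ofReal_gaussSmooth μ hr]
  rw [lintegral_lintegral_swap (by fun_prop)]
  simp [sub_eq_add_neg, lintegral_add_right_eq_self (fun x => ENNReal.ofReal (gaussDens d r x)),
    lintegral_gaussDens hr]

lemma integrable_gaussSmooth (hr : 0 < r) : Integrable (gaussSmooth d r μ) := by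
  refine ⟨(stronglyMeasurable_gaussSmooth μ).aestronglyMeasurable, ?_⟩
  rw [hasFiniteIntegral_iff_ofReal (ae_of_all _ fun x => (gaussSmooth_pos μ hr x).le),
    lintegral_gaussSmooth μ hr]
  exact ENNReal.one_lt_top

lemma integral_gaussSmooth (hr : 0 < r) : ∫ x, gaussSmooth d r μ x = 1 := by
  rw [integral_eq_lintegral_of_nonneg_ae (ae_of_all _ fun x => (gaussSmooth_pos μ hr x).le)
    (stronglyMeasurable_gaussSmooth μ).aestronglyMeasurable, lintegral_gaussSmooth μ hr,
    ENNReal.toReal_one]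

lemma ofReal_integral_gaussSmooth_mul_gaussSmooth (hr : 0 < r)
    (t : EuclideanSpace ℝ (Fin d)) :
    ENNReal.ofReal (∫ τ, gaussSmooth d r μ τ * gaussSmooth d r ν (t - τ)) =
      ∫⁻ w, ENNReal.ofReal (gaussDens d (2 * r) (t - w.1 - w.2)) ∂(μ.prod ν) := by
  have hint : Integrable (fun τ => gaussSmooth d r μ τ * gaussSmooth d r ν (t - τ)) :=
    (integrable_gaussSmooth μ hr).mul_bdd
      ((stronglyMeasurable_gaussSmooth ν).comp_measurable (by fun_prop)).aestronglyMeasurable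
      (ae_of_all _ fun τ => by
        rw [Real.norm_of_nonneg (gaussSmooth_pos ν hr _).le]
        exact gaussSmooth_le ν hr _)
  rw [ofReal_integral_eq_lintegral_ofReal hint
    (ae_of_all _ fun τ => mul_nonneg (gaussSmooth_pos μ hr τ).le (gaussSmooth_pos ν hr _).le)]
  calc ∫⁻ τ, ENNReal.ofReal (gaussSmooth d r μ τ * gaussSmooth d r ν (t - τ))
      = ∫⁻ τ, ∫⁻ w, ENNReal.ofReal (gaussDens d r (τ - w.1)) *
          ENNReal.ofReal (gaussDens d r (t - τ - w.2)) ∂(μ.prod ν) := by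
        refine lintegral_congr fun τ => ?_
        rw [ENNReal.ofReal_mul (gaussSmooth_pos μ hr τ).le, ofReal_gaussSmooth μ hr,
          ofReal_gaussSmooth ν hr]
        exact (lintegral_prod_mul (by fun_prop) (by fun_prop)).symm
    _ = ∫⁻ w, (∫⁻ τ, ENNReal.ofReal (gaussDens d r (τ - w.1)) *
          ENNReal.ofReal (gaussDens d r (t - τ - w.2))) ∂(μ.prod ν) :=
        lintegral_lintegral_swap (by fun_prop)
    _ = ∫⁻ w, ENNReal.ofReal (gaussDens d (2 * r) (t - w.1 - w.2)) ∂(μ.prod ν) := by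
        refine lintegral_congr fun w => ?_
        rw [← lintegral_gaussDens_mul_gaussDens hr,
          ← lintegral_add_right_eq_self _ w.1]
        simp only [add_sub_cancel_right]
        congr! 5
        abel

lemma rpow_mul_gaussSmooth_mul_le (hr : 0 < r) (x y : EuclideanSpace ℝ (Fin d)) :
    (Real.pi * r) ^ ((d : ℝ) / 2) * (gaussSmooth d r μ x * gaussSmooth d r ν y) ≤
      ∫ τ, gaussSmooth d r μ τ * gaussSmooth d r ν (x + y - τ) := by
  have hc : 0 ≤ (Real.pi * r) ^ ((d : ℝ) / 2) := by positivity
  rw [← ENNReal.ofReal_le_ofReal_iff (integral_nonneg fun τ =>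
    mul_nonneg (gaussSmooth_pos μ hr τ).le (gaussSmooth_pos ν hr _).le),
    ofReal_integral_gaussSmooth_mul_gaussSmooth μ ν hr, ENNReal.ofReal_mul hc,
    ENNReal.ofReal_mul (gaussSmooth_pos μ hr x).le, ofReal_gaussSmooth μ hr,
    ofReal_gaussSmooth ν hr, ← lintegral_prod_mul (by fun_prop) (by fun_prop),
    ← lintegral_const_mul _ (by fun_prop)]
  refine lintegral_mono fun w => ?_
  rw [← ENNReal.ofReal_mul (gaussDens_pos hr _).le, ← ENNReal.ofReal_mul hc]
  refine ENNReal.ofReal_le_ofReal ?_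
  convert rpow_mul_gaussDens_mul_le hr (x - w.1) (y - w.2) using 2
  abel

end GaussSmooth

theorem reverse_entropy_power_smoothed_general
    (d : ℕ) (r : ℝ) (hr : 0 < r)
    (μ ν : Measure (EuclideanSpace ℝ (Fin d)))
    [IsProbabilityMeasure μ] [IsProbabilityMeasure ν]
    (p q pq : EuclideanSpace ℝ (Fin d) → ℝ)
    (hp : ∀ x, p x = ∫ u, gaussDens d r (x - u) ∂μ)
    (hq : ∀ x, q x = ∫ u, gaussDens d r (x - u) ∂ν)
    (hpq : ∀ t, pq t = ∫ τ, p τ * q (t - τ))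
    (hpInt : Integrable fun x => p x * Real.log (p x))
    (hqInt : Integrable fun x => q x * Real.log (q x))
    (hpqInt : Integrable fun t => pq t * Real.log (pq t)) :
    -∫ t, pq t * Real.log (pq t) ≤
      (-∫ x, p x * Real.log (p x)) + (-∫ y, q y * Real.log (q y)) -
        ((d : ℝ) / 2) * Real.log (Real.pi * r) := by
  obtain rfl : p = gaussSmooth d r μ := funext hp
  obtain rfl : q = gaussSmooth d r ν := funext hq
  have h := log_add_integral_mul_log_le_integral_conv_mul_log
    (Real.rpow_pos_of_pos (by positivity : 0 < Real.pi * r) ((d : ℝ) / 2))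
    (gaussSmooth_pos μ hr) (gaussSmooth_pos ν hr)
    (integrable_gaussSmooth μ hr) (integrable_gaussSmooth ν hr)
    (integral_gaussSmooth μ hr) (integral_gaussSmooth ν hr) hpq
    (fun x y => hpq (x + y) ▸ rpow_mul_gaussSmooth_mul_le μ ν hr x y) hpInt hqInt hpqInt
  rw [Real.log_rpow (by positivity)] at h
  linarith

/-- **reverse entropy power inequality for Gaussian-smoothed measures.**
Let `μ, ν` be compactly supported probability measures on `ℝ^d`, let `p = μ ⋆ g_r` and
`q = ν ⋆ g_r` be the densities of their Gaussian smoothings, and let `p ∗ q` be their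
convolution. If the differential entropies `h(p)`, `h(q)`, `h(p ∗ q)` are defined
(the integrands are integrable), then `h(p ∗ q) ≤ h(p) + h(q) − (d/2)·log(πr)`. -/
theorem reverse_entropy_power_smoothed
    (d : ℕ) (hd : 1 ≤ d) (r : ℝ) (hr : 0 < r)
    (μ ν : Measure (EuclideanSpace ℝ (Fin d)))
    [IsProbabilityMeasure μ] [IsProbabilityMeasure ν]
    (hμ : ∃ K : Set (EuclideanSpace ℝ (Fin d)), IsCompact K ∧ μ Kᶜ = 0)
    (hν : ∃ K : Set (EuclideanSpace ℝ (Fin d)), IsCompact K ∧ ν Kᶜ = 0)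
    (p q pq : EuclideanSpace ℝ (Fin d) → ℝ)
    (hp : ∀ x, p x = ∫ u, gaussDens d r (x - u) ∂μ)
    (hq : ∀ x, q x = ∫ u, gaussDens d r (x - u) ∂ν)
    (hpq : ∀ t, pq t = ∫ τ, p τ * q (t - τ))
    (hpInt : Integrable fun x => p x * Real.log (p x))
    (hqInt : Integrable fun x => q x * Real.log (q x))
    (hpqInt : Integrable fun t => pq t * Real.log (pq t)) :
    -∫ t, pq t * Real.log (pq t) ≤
      (-∫ x, p x * Real.log (p x)) + (-∫ y, q y * Real.log (q y)) -
        ((d : ℝ) / 2) * Real.log (Real.pi * r) :=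
  reverse_entropy_power_smoothed_general d r hr μ ν p q pq hp hq hpq hpInt hqInt hpqInt
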